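/- Let h : {1, 2, 3, …} → ℚ be a sequence satisfying the recursion h_{n+1} = Σ_{l=1}^{n} ((2n−1)! · l² · (n+1−l)²) / ((2l−2)! · (2(n−l))! · (n+1)) · h_l · h_{n+1−l} for all n ≥ 1. Define the formal power series H̃ ∈ ℚ[[x, q, s]] by H̃(x, q, s) = Σ_{n≥1} h_n · qⁿ · exp(n·s·x) · s^{2n−2}/(2n−2)! (where exp(n·s·x) is expanded as a formal power series in s·x), and let D = q·∂/∂q. Then H̃ satisfies ∂/∂s (D²H̃) = 2s·(D²H̃)·(D³H̃) + x·(D³H̃) in ℚ[[x, q, s]]. -/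

import Mathlib

/-- The Euler-type derivation `D = q·∂/∂q` on `ℚ[[x,q,s]]`, where the variable `x`
corresponds to the index `0`, `q` to the index `1`, and `s` to the index `2`. -/
noncomputable def Dq (F : MvPowerSeries (Fin 3) ℚ) : MvPowerSeries (Fin 3) ℚ :=
  fun m => (m 1 : ℚ) * MvPowerSeries.coeff m F

/-- The formal partial derivative `∂/∂s` on `ℚ[[x,q,s]]`. -/
noncomputable def Ds (F : MvPowerSeries (Fin 3) ℚ) : MvPowerSeries (Fin 3) ℚ :=
  fun m => ((m 2 : ℚ) + 1) * MvPowerSeries.coeff (m + Finsupp.single 2 1) F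

/-- The series `H̃(x,q,s) = Σ_{n≥1} h_n·qⁿ·exp(n·s·x)·s^{2n−2}/(2n−2)!` in `ℚ[[x,q,s]]`,
where `exp(n·s·x)` is expanded as a formal power series in `s·x`:  the coefficient of
`x^a q^n s^c` vanishes unless `n ≥ 1` and `c = 2n − 2 + a`, in which case it equals
`h_n·nᵃ/(a!·(2n−2)!)`. -/
noncomputable def Htilde (h : ℕ → ℚ) : MvPowerSeries (Fin 3) ℚ :=
  fun m => if 1 ≤ m 1 ∧ m 2 = 2 * m 1 - 2 + m 0
    then h (m 1) * (m 1 : ℚ) ^ (m 0) / (((m 0).factorial : ℚ) * ((2 * m 1 - 2).factorial : ℚ))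
    else 0

/-! Every series involved has the shape `Σₙ fₙ qⁿ e^{nsx} s^{2n-k}` (`expSeries k f`). On such
series `D` multiplies `fₙ` by `n`, `∂/∂s` multiplies it by `2n - k` up to the term `x·D`
coming from the exponential (this is the source of `x·D³H̃`), and multiplication convolves the
sequences because `e^{lsx} e^{l'sx} = e^{(l+l')sx}`. With `fₙ = hₙ/(2n-2)!` the equation becomes
`(2n-2) n² fₙ = 2 Σ_{l+l'=n} l² l'³ f_l f_{l'}`; symmetrising in `l ↔ l'` turns the right side into
`n Σ_{l+l'=n} l² l'² f_l f_{l'}`, which is the recursion. -/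

open Finset MvPowerSeries

theorem sum_antidiagonal_pow_div_factorial {K : Type*} [Field K] [CharZero K] (x y : K) (a : ℕ) :
    ∑ r ∈ antidiagonal a, x ^ r.1 / r.1.factorial * (y ^ r.2 / r.2.factorial) =
      (x + y) ^ a / a.factorial := by
  have := congrArg (PowerSeries.coeff a) (PowerSeries.exp_mul_exp_eq_exp_add x y)
  simpa [PowerSeries.coeff_mul, PowerSeries.coeff_rescale, PowerSeries.coeff_exp, div_eq_mul_inv,
    mul_mul_mul_comm] using this

theorem coeff_X_mul_eq_ite {σ R : Type*} [CommSemiring R] [DecidableEq σ] (s : σ)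
    (φ : MvPowerSeries σ R) (m : σ →₀ ℕ) :
    coeff m (X s * φ) = if 1 ≤ m s then coeff (m - Finsupp.single s 1) φ else 0 := by
  rw [X_def, coeff_monomial_mul]
  simp only [Finsupp.single_le_iff, one_mul]

/-- `Σₙ fₙ qⁿ e^{nsx} s^{2n-k}`. -/
noncomputable def expSeries (k : ℕ) (f : ℕ → ℚ) : MvPowerSeries (Fin 3) ℚ :=
  fun m => if m 2 + k = 2 * m 1 + m 0 then f (m 1) * (m 1 : ℚ) ^ m 0 / (m 0).factorial else 0

section expSeries

variable {k : ℕ} {f : ℕ → ℚ}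

theorem coeff_expSeries (m : Fin 3 →₀ ℕ) :
    coeff m (expSeries k f) =
      if m 2 + k = 2 * m 1 + m 0 then f (m 1) * (m 1 : ℚ) ^ m 0 / (m 0).factorial else 0 :=
  rfl

theorem eq_of_coeff_expSeries_ne_zero {m : Fin 3 →₀ ℕ} (h : coeff m (expSeries k f) ≠ 0) :
    m 2 + k = 2 * m 1 + m 0 := by
  by_contra hm
  exact h (if_neg hm)

theorem Htilde_eq_expSeries (h : ℕ → ℚ) :
    Htilde h = expSeries 2 (fun n => h n / (2 * n - 2).factorial) := by
  ext m
  rw [coeff_expSeries]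
  change (if _ then _ else _) = _
  by_cases hn : m 1 = 0
  · -- for `n = 0` the condition `c + 2 = a` forces `a ≥ 2`, so the factor `0 ^ a` vanishes
    rw [if_neg (by omega)]
    split_ifs with hm
    · rw [hn, Nat.cast_zero, zero_pow (by omega), mul_zero, zero_div]
    · rfl
  · refine if_congr (by omega) (by ring) rfl

theorem Dq_expSeries : Dq (expSeries k f) = expSeries k (fun n => n * f n) := by
  ext m
  change (m 1 : ℚ) * coeff m (expSeries k f) = _
  simp only [coeff_expSeries, mul_ite, mul_zero]
  exact if_congr Iff.rfl (by ring) rfl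

theorem Dq_iterate_expSeries (j : ℕ) :
    Dq^[j] (expSeries k f) = expSeries k (fun n => n ^ j * f n) := by
  induction j with
  | zero => simp
  | succ j ih =>
    rw [Function.iterate_succ_apply', ih, Dq_expSeries]
    congr 1
    funext n
    ring

theorem C_mul_expSeries (c : ℚ) : C c * expSeries k f = expSeries k (fun n => c * f n) := by
  ext m
  simp only [coeff_C_mul, coeff_expSeries, mul_ite, mul_zero]
  exact if_congr Iff.rfl (by ring) rfl

theorem Ds_expSeries :
    Ds (expSeries k f) =
      expSeries (k + 1) (fun n => (2 * n - k : ℚ) * f n) +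
        X 0 * expSeries k (fun n => n * f n) := by
  ext m
  change ((m 2 : ℚ) + 1) * coeff (m + Finsupp.single 2 1) (expSeries k f) = _
  rw [map_add, coeff_X_mul_eq_ite]
  simp only [coeff_expSeries, Finsupp.coe_add, Finsupp.coe_tsub, Pi.add_apply, Pi.sub_apply,
    Finsupp.single_apply, Fin.isValue, ↓reduceIte, Fin.reduceEq, add_zero, mul_ite, mul_zero,
    tsub_zero, zero_ne_one]
  generalize m 0 = a, m 1 = n, m 2 = c
  by_cases hcond : c + 1 + k = 2 * n + a
  · have hcast : (c : ℚ) + 1 + k = 2 * n + a := by exact_mod_cast hcond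
    rw [if_pos hcond, if_pos (by omega)]
    rcases a with _ | a
    · rw [if_neg (by omega)]
      simp only [pow_zero, Nat.factorial_zero, Nat.cast_one, div_one, add_zero,
        CharP.cast_eq_zero] at hcast ⊢
      linear_combination f n * hcast
    · rw [if_pos (by omega), if_pos (by omega), Nat.add_sub_cancel, Nat.factorial_succ]
      push_cast at hcast ⊢
      field_simp
      linear_combination (n : ℚ) ^ a * n * f n * hcast
  · rw [if_neg hcond, if_neg (by omega)]
    split_ifs <;> first | omega | simp

theorem X_two_mul_expSeries (hf : ∀ n, 2 * n ≤ k → f n = 0) :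
    X 2 * expSeries (k + 1) f = expSeries k f := by
  ext m
  rw [coeff_X_mul_eq_ite]
  simp only [coeff_expSeries, Finsupp.coe_tsub, Pi.sub_apply, Finsupp.single_apply, Fin.isValue,
    ↓reduceIte, Fin.reduceEq, tsub_zero]
  by_cases hc : 1 ≤ m 2
  · exact (if_pos hc).trans (if_congr (by omega) rfl rfl)
  · rw [if_neg hc]
    split_ifs with hm
    · rw [hf (m 1) (by omega), zero_mul, zero_div]
    · rfl

end expSeries

theorem apply_add_apply_of_mem_antidiagonal {σ : Type*} [DecidableEq σ] {m : σ →₀ ℕ}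
    {p : (σ →₀ ℕ) × (σ →₀ ℕ)} (hp : p ∈ antidiagonal m) (j : σ) :
    p.1 j + p.2 j = m j := by
  rw [← HasAntidiagonal.mem_antidiagonal.mp hp]
  rfl

section expSeries_mul

variable {k k' : ℕ} {f g : ℕ → ℚ}

theorem coeff_expSeries_mul_expSeries_of_ne {m : Fin 3 →₀ ℕ}
    (hm : m 2 + (k + k') ≠ 2 * m 1 + m 0) :
    coeff m (expSeries k f * expSeries k' g) = 0 := by
  rw [coeff_mul]
  refine sum_eq_zero fun p hp => ?_
  by_contra hne
  have h₁ := eq_of_coeff_expSeries_ne_zero (left_ne_zero_of_mul hne)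
  have h₂ := eq_of_coeff_expSeries_ne_zero (right_ne_zero_of_mul hne)
  have hs := apply_add_apply_of_mem_antidiagonal hp
  have := hs 0
  have := hs 1
  have := hs 2
  omega

-- `hf`, `hg`: a term `fₗ qˡ e^{lsx} s^{2l-k}` with `2l < k` would need a negative power of `s`.
theorem coeff_expSeries_mul_expSeries_of_eq (hf : ∀ n, 2 * n < k → f n = 0)
    (hg : ∀ n, 2 * n < k' → g n = 0) {m : Fin 3 →₀ ℕ}
    (hm : m 2 + (k + k') = 2 * m 1 + m 0) :
    coeff m (expSeries k f * expSeries k' g) =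
      ∑ x ∈ antidiagonal (m 1) ×ˢ antidiagonal (m 0),
        f x.1.1 * (x.1.1 : ℚ) ^ x.2.1 / x.2.1.factorial *
          (g x.1.2 * (x.1.2 : ℚ) ^ x.2.2 / x.2.2.factorial) := by
  rw [coeff_mul]
  refine sum_bij_ne_zero (fun p _ _ => ((p.1 1, p.2 1), (p.1 0, p.2 0))) ?_ ?_ ?_ ?_
  · intro p hp _
    have := apply_add_apply_of_mem_antidiagonal hp
    simp only [mem_product, HasAntidiagonal.mem_antidiagonal]
    exact ⟨this 1, this 0⟩
  · intro p hp hne p' hp' hne' hpp'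
    have h₁ := eq_of_coeff_expSeries_ne_zero (left_ne_zero_of_mul hne)
    have h₁' := eq_of_coeff_expSeries_ne_zero (left_ne_zero_of_mul hne')
    have hs := apply_add_apply_of_mem_antidiagonal hp
    have hs' := apply_add_apply_of_mem_antidiagonal hp'
    simp only [Prod.mk.injEq] at hpp'
    have := hs 2
    have := hs' 2
    refine Prod.ext (Finsupp.ext fun j => ?_) (Finsupp.ext fun j => ?_) <;> fin_cases j <;>
      simp <;> omega
  · rintro ⟨⟨l, l'⟩, ⟨i, j⟩⟩ hx hne
    simp only [mem_product, HasAntidiagonal.mem_antidiagonal] at hx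
    have hl : k ≤ 2 * l := by
      by_contra hl
      apply hne
      rw [hf l (by omega), zero_mul, zero_div, zero_mul]
    have hl' : k' ≤ 2 * l' := by
      by_contra hl'
      apply hne
      rw [hg l' (by omega), zero_mul, zero_div, mul_zero]
    refine ⟨(Finsupp.equivFunOnFinite.symm ![i, l, 2 * l + i - k],
      Finsupp.equivFunOnFinite.symm ![j, l', 2 * l' + j - k']), ?_, ?_, ?_⟩
    · rw [HasAntidiagonal.mem_antidiagonal]
      ext t
      fin_cases t <;> simp <;> omega
    · simp only [coeff_expSeries, Finsupp.equivFunOnFinite_symm_apply_apply, Matrix.cons_val,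
        Matrix.cons_val_one, Matrix.cons_val_zero]
      rwa [if_pos (by omega), if_pos (by omega)]
    · simp
  · intro p _ hne
    rw [coeff_expSeries, coeff_expSeries,
      if_pos (eq_of_coeff_expSeries_ne_zero (left_ne_zero_of_mul hne)),
      if_pos (eq_of_coeff_expSeries_ne_zero (right_ne_zero_of_mul hne))]

theorem expSeries_mul_expSeries (hf : ∀ n, 2 * n < k → f n = 0)
    (hg : ∀ n, 2 * n < k' → g n = 0) :
    expSeries k f * expSeries k' g =
      expSeries (k + k') (fun n => ∑ p ∈ antidiagonal n, f p.1 * g p.2) := by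
  ext m
  by_cases hm : m 2 + (k + k') = 2 * m 1 + m 0
  · rw [coeff_expSeries_mul_expSeries_of_eq hf hg hm, coeff_expSeries, if_pos hm, sum_product,
      mul_div_assoc, sum_mul]
    refine sum_congr rfl fun q hq => ?_
    rw [← HasAntidiagonal.mem_antidiagonal.mp hq, Nat.cast_add,
      ← sum_antidiagonal_pow_div_factorial, mul_sum]
    exact sum_congr rfl fun r _ => by ring
  · rw [coeff_expSeries_mul_expSeries_of_ne hm, coeff_expSeries, if_neg hm]

end expSeries_mul

theorem two_mul_sum_antidiagonal_sq_mul_cube (F : ℕ → ℚ) (n : ℕ) :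
    2 * ∑ p ∈ antidiagonal n, (p.1 : ℚ) ^ 2 * F p.1 * ((p.2 : ℚ) ^ 3 * F p.2) =
      n * ∑ p ∈ antidiagonal n, (p.1 : ℚ) ^ 2 * (p.2 : ℚ) ^ 2 * F p.1 * F p.2 := by
  rw [two_mul]
  nth_rw 2 [← Nat.sum_antidiagonal_swap]
  rw [← sum_add_distrib, mul_sum]
  refine sum_congr rfl fun p hp => ?_
  rw [← HasAntidiagonal.mem_antidiagonal.mp hp, Prod.fst_swap, Prod.snd_swap, Nat.cast_add]
  ring

theorem sum_antidiagonal_sq_mul_sq_of_rec (h : ℕ → ℚ)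
    (hrec : ∀ n : ℕ, 1 ≤ n →
      h (n + 1) = ∑ l ∈ Finset.Icc 1 n,
        (((2 * n - 1).factorial : ℚ) * (l : ℚ) ^ 2 * ((n + 1 - l : ℕ) : ℚ) ^ 2) /
            (((2 * l - 2).factorial : ℚ) * ((2 * (n - l)).factorial : ℚ) * ((n : ℚ) + 1)) *
          h l * h (n + 1 - l)) (n : ℕ) :
    ∑ p ∈ antidiagonal n, (p.1 : ℚ) ^ 2 * (p.2 : ℚ) ^ 2 *
        (h p.1 / (2 * p.1 - 2).factorial) * (h p.2 / (2 * p.2 - 2).factorial) =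
      2 * ((n : ℚ) - 1) * n * (h n / (2 * n - 2).factorial) := by
  rcases n with _ | _ | N
  · simp
  · simp [Nat.antidiagonal_succ]
  · rw [Nat.sum_antidiagonal_eq_sum_range_succ_mk, sum_range_succ, sum_range_succ']
    simp only [Nat.sub_self, Nat.cast_zero, ne_eq, OfNat.ofNat_ne_zero, not_false_eq_true,
      zero_pow, mul_zero, zero_mul, add_zero]
    conv_rhs => rw [hrec (N + 1) (by omega), ← Ico_add_one_right_eq_Icc, sum_Ico_eq_sum_range,
      Nat.add_sub_cancel, sum_div, mul_sum]
    refine sum_congr rfl fun k hk => ?_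
    obtain ⟨j, rfl⟩ := Nat.exists_eq_add_of_le (Nat.le_of_lt_succ (mem_range.mp hk))
    rw [add_comm 1 k, show k + j + 1 + 1 - (k + 1) = j + 1 by omega,
      show k + j + 1 - (k + 1) = j by omega, show 2 * (k + 1) - 2 = 2 * k by omega,
      show 2 * (j + 1) - 2 = 2 * j by omega,
      show 2 * (k + j + 1) - 1 = 2 * k + 2 * j + 1 by omega,
      show 2 * (k + j + 1 + 1) - 2 = 2 * k + 2 * j + 1 + 1 by omega,
      Nat.factorial_succ (2 * k + 2 * j + 1)]
    have : ((2 * k + 2 * j + 1).factorial : ℚ) ≠ 0 := by positivity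
    field_simp
    push_cast
    ring

theorem sum_antidiagonal_sq_mul_cube_of_rec (h : ℕ → ℚ)
    (hrec : ∀ n : ℕ, 1 ≤ n →
      h (n + 1) = ∑ l ∈ Finset.Icc 1 n,
        (((2 * n - 1).factorial : ℚ) * (l : ℚ) ^ 2 * ((n + 1 - l : ℕ) : ℚ) ^ 2) /
            (((2 * l - 2).factorial : ℚ) * ((2 * (n - l)).factorial : ℚ) * ((n : ℚ) + 1)) *
          h l * h (n + 1 - l)) (n : ℕ) :
    ∑ p ∈ antidiagonal n, (p.1 : ℚ) ^ 2 * (h p.1 / (2 * p.1 - 2).factorial) *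
        ((p.2 : ℚ) ^ 3 * (h p.2 / (2 * p.2 - 2).factorial)) =
      ((n : ℚ) - 1) * (n ^ 2 * (h n / (2 * n - 2).factorial)) := by
  have := two_mul_sum_antidiagonal_sq_mul_cube (fun n => h n / (2 * n - 2).factorial) n
  rw [sum_antidiagonal_sq_mul_sq_of_rec h hrec n] at this
  linear_combination this / 2

/-- **The reduced topological recursion relation for `ℂP¹` with `x = x⁰` kept.**
If the sequence `h` of rational numbers satisfies the recursion
`h_{n+1} = Σ_{l=1}^{n} ((2n−1)!·l²·(n+1−l)²)/((2l−2)!·(2(n−l))!·(n+1))·h_l·h_{n+1−l}`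
for all `n ≥ 1`, then `H̃ = Σ_{n≥1} h_n qⁿ e^{nsx} s^{2n−2}/(2n−2)!` satisfies
`∂/∂s(D²H̃) = 2s·(D²H̃)·(D³H̃) + x·(D³H̃)` in `ℚ[[x,q,s]]`, where `D = q·∂/∂q`. -/
theorem trr_CP1_with_x (h : ℕ → ℚ)
    (hrec : ∀ n : ℕ, 1 ≤ n →
      h (n + 1) = ∑ l ∈ Finset.Icc 1 n,
        (((2 * n - 1).factorial : ℚ) * (l : ℚ) ^ 2 * ((n + 1 - l : ℕ) : ℚ) ^ 2) /
            (((2 * l - 2).factorial : ℚ) * ((2 * (n - l)).factorial : ℚ) * ((n : ℚ) + 1)) *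
          h l * h (n + 1 - l)) :
    Ds (Dq (Dq (Htilde h))) =
      2 * MvPowerSeries.X 2 * Dq (Dq (Htilde h)) * Dq (Dq (Dq (Htilde h))) +
        MvPowerSeries.X 0 * Dq (Dq (Dq (Htilde h))) := by
  have hD2 : Dq (Dq (Htilde h)) =
      expSeries 2 (fun n => n ^ 2 * (h n / (2 * n - 2).factorial)) := by
    rw [Htilde_eq_expSeries]
    exact Dq_iterate_expSeries 2
  have hD3 : Dq (Dq (Dq (Htilde h))) =
      expSeries 2 (fun n => n ^ 3 * (h n / (2 * n - 2).factorial)) := by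
    rw [Htilde_eq_expSeries]
    exact Dq_iterate_expSeries 3
  have hprod : Dq (Dq (Htilde h)) * Dq (Dq (Dq (Htilde h))) =
      expSeries 4 (fun n => ((n : ℚ) - 1) * (n ^ 2 * (h n / (2 * n - 2).factorial))) := by
    rw [hD3, hD2, expSeries_mul_expSeries (fun n hn => by obtain rfl : n = 0 := (by omega); simp)
      (fun n hn => by obtain rfl : n = 0 := (by omega); simp)]
    simp only [sum_antidiagonal_sq_mul_cube_of_rec h hrec]
  rw [mul_assoc _ (Dq (Dq (Htilde h))), hprod, hD3, hD2, Ds_expSeries, mul_assoc,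
    X_two_mul_expSeries (fun n hn => by obtain rfl | rfl : n = 0 ∨ n = 1 := (by omega) <;> simp),
    ← map_ofNat C 2, C_mul_expSeries]
  congr 1
  · congr 1
    funext n
    push_cast
    ring
  · congr 2
    funext n
    ring
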